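/- arXiv:1006.1225 — 3 statements merged into one kernel-verified Lean document; each statement's English description precedes it below -/
import Mathlib

section
/- Let a : [0,∞) → ℝ be continuous with compact support and let λ > 0 be such that λ + 4π r² a(r) > 0 for all r ≥ 0. If u ∈ C²([0,∞)) is a bounded solution of (r² u')' = (λ + 4π r² a(r)) u on [0,∞), then u = 0. -/
open Real Set Filter Topology

/-!
Write `flux u r = r² u'(r)` and `c = l + 4π r² a`, so that the equation reads `(flux u)' = c u`.
Then `W = u · flux u` satisfies `W' = r² u'² + c u² ≥ 0` and `W 0 = 0`, so for a solution that does
not vanish identically `W` becomes positive at some `r₁ > 0` and stays positive. Beyond `r₁`, `u`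
and `u'` then have one common sign, so `|u|` increases, and `|flux u|` grows at least linearly
because `c`, being positive and equal to `l` outside the support of `a`, is bounded below by some
`m > 0`. Hence `|u'| ≥ K / r` and `|u| ≥ K log r - C`, which contradicts boundedness.
-/

lemma exists_pos_le_of_eventuallyEq_const {f : ℝ → ℝ} {L : ℝ} (hf : ContinuousOn f (Ici 0))
    (hpos : ∀ r, 0 ≤ r → 0 < f r) (hL : f =ᶠ[atTop] fun _ => L) :
    ∃ m, 0 < m ∧ ∀ r, 0 ≤ r → m ≤ f r := by
  obtain ⟨R, hR⟩ := eventually_atTop.mp hL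
  obtain ⟨x₀, hx₀, hmin⟩ := isCompact_Icc.exists_isMinOn
    (nonempty_Icc.mpr (le_max_left 0 R)) (hf.mono Icc_subset_Ici_self)
  refine ⟨f x₀, hpos x₀ hx₀.1, fun r hr => ?_⟩
  rcases le_total r (max 0 R) with h | h
  · exact hmin ⟨hr, h⟩
  · calc f x₀ ≤ f (max 0 R) := hmin ⟨le_max_left _ _, le_rfl⟩
      _ = f r := by rw [hR _ (le_max_right _ _), hR r ((le_max_right _ _).trans h)]

lemma tendsto_atTop_of_div_le_deriv {f : ℝ → ℝ} {a C : ℝ} (ha : 0 < a) (hC : 0 < C)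
    (hf : ∀ x, a ≤ x → DifferentiableAt ℝ f x) (hf' : ∀ x, a ≤ x → C / x ≤ deriv f x) :
    Tendsto f atTop atTop := by
  have hderiv : ∀ x, a ≤ x →
      HasDerivAt (fun y => f y - C * log y) (deriv f x - C * x⁻¹) x := fun x hx =>
    (hf x hx).hasDerivAt.sub ((hasDerivAt_log (by linarith)).const_mul C)
  have hmono : MonotoneOn (fun y => f y - C * log y) (Ici a) := by
    refine monotoneOn_of_hasDerivWithinAt_nonneg (convex_Ici a)
      (fun x hx => (hderiv x hx).continuousAt.continuousWithinAt)
      (fun x hx => (hderiv x (interior_subset hx)).hasDerivWithinAt) fun x hx => ?_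
    have := hf' x (interior_subset hx)
    rw [div_eq_mul_inv] at this
    linarith
  have hlow : ∀ x, a ≤ x → f a - C * log a + C * log x ≤ f x := fun x hx => by
    have := hmono self_mem_Ici hx hx
    linarith
  exact tendsto_atTop_mono' _ (eventually_atTop.mpr ⟨a, hlow⟩)
    (tendsto_atTop_add_const_left _ _ (tendsto_log_atTop.const_mul_atTop hC))

noncomputable def flux (u : ℝ → ℝ) (r : ℝ) : ℝ := r ^ 2 * deriv u r

def IsRadialSolution (c u : ℝ → ℝ) : Prop :=
  ContDiffOn ℝ 2 u (Ici 0) ∧ ∀ r, 0 ≤ r → deriv (flux u) r = c r * u r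

lemma flux_neg (u : ℝ → ℝ) : flux (-u) = -flux u := by
  ext r
  simp [flux, deriv.neg']

namespace IsRadialSolution

variable {c u : ℝ → ℝ} {m r r₀ r₁ : ℝ} (h : IsRadialSolution c u)
include h

lemma neg : IsRadialSolution c (-u) := by
  refine ⟨h.1.neg, fun r hr => ?_⟩
  rw [flux_neg, deriv.neg, h.2 r hr, Pi.neg_apply, mul_neg]

lemma differentiableAt (hr : 0 < r) : DifferentiableAt ℝ u r :=
  (h.1.contDiffAt (Ici_mem_nhds hr)).differentiableAt (by norm_num)

lemma differentiableAt_deriv (hr : 0 < r) : DifferentiableAt ℝ (deriv u) r :=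
  ((h.1.mono Ioi_subset_Ici_self).deriv_of_isOpen isOpen_Ioi (m := 1) (by norm_num)
    |>.differentiableOn (by norm_num)).differentiableAt (Ioi_mem_nhds hr)

lemma hasDerivAt_flux (hr : 0 < r) : HasDerivAt (flux u) (c r * u r) r := by
  rw [← h.2 r hr.le]
  exact ((differentiableAt_pow 2).mul (h.differentiableAt_deriv hr)).hasDerivAt

lemma hasDerivAt_mul_flux (hr : 0 < r) :
    HasDerivAt (u * flux u) (r ^ 2 * deriv u r ^ 2 + c r * u r ^ 2) r := by
  refine ((h.differentiableAt hr).hasDerivAt.mul (h.hasDerivAt_flux hr)).congr_deriv ?_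
  rw [flux]
  ring

lemma continuousOn_mul_flux : ContinuousOn (u * flux u) (Ici 0) := by
  have hcont : ContinuousOn (fun s => u s * (s ^ 2 * derivWithin u (Ici 0) s)) (Ici 0) :=
    h.1.continuousOn.mul ((continuousOn_pow 2).mul
      (h.1.continuousOn_derivWithin (uniqueDiffOn_Ici 0) (by norm_num)))
  refine hcont.congr fun r hr => ?_
  rcases (mem_Ici.mp hr).eq_or_lt with rfl | hr
  · simp [flux]
  · simp only [Pi.mul_apply, flux, derivWithin_of_mem_nhds (Ici_mem_nhds hr)]

lemma monotoneOn_mul_flux (hc : ∀ r, 0 ≤ r → 0 ≤ c r) : MonotoneOn (u * flux u) (Ici 0) := by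
  refine monotoneOn_of_hasDerivWithinAt_nonneg (convex_Ici 0) h.continuousOn_mul_flux
    (f' := fun x => x ^ 2 * deriv u x ^ 2 + c x * u x ^ 2)
    (fun x hx => ?_) fun x hx => ?_
  all_goals rw [interior_Ici] at hx
  · exact (h.hasDerivAt_mul_flux hx).hasDerivWithinAt
  · have := hc x hx.le
    positivity

lemma mul_flux_nonneg (hc : ∀ r, 0 ≤ r → 0 ≤ c r) (hr : 0 ≤ r) : 0 ≤ (u * flux u) r := by
  simpa [flux] using h.monotoneOn_mul_flux hc self_mem_Ici hr hr

lemma exists_mul_flux_pos (hc : ∀ r, 0 ≤ r → 0 < c r) (hr₀ : 0 ≤ r₀) (hu₀ : u r₀ ≠ 0) :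
    ∃ r₁, 0 < r₁ ∧ 0 < (u * flux u) r₁ := by
  have hne : ∀ᶠ x in 𝓝[≥] r₀, u x ≠ 0 :=
    Tendsto.eventually_ne (h.1.continuousOn.mono (Ici_subset_Ici.mpr hr₀) r₀ self_mem_Ici) hu₀
  obtain ⟨r₁, hr₁ : r₀ < r₁, hsub⟩ := mem_nhdsGE_iff_exists_Icc_subset.mp hne
  have hstrict : StrictMonoOn (u * flux u) (Icc r₀ r₁) := by
    refine strictMonoOn_of_hasDerivWithinAt_pos (convex_Icc r₀ r₁)
      (f' := fun x => x ^ 2 * deriv u x ^ 2 + c x * u x ^ 2)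
      (h.continuousOn_mul_flux.mono (Icc_subset_Ici_iff hr₁.le |>.mpr hr₀))
      (fun x hx => ?_) fun x hx => ?_
    all_goals rw [interior_Icc] at hx
    · exact (h.hasDerivAt_mul_flux (hr₀.trans_lt hx.1)).hasDerivWithinAt
    · have := hc x (hr₀.trans hx.1.le)
      have := sq_pos_of_ne_zero (hsub (Ioo_subset_Icc_self hx))
      positivity
  refine ⟨r₁, hr₀.trans_lt hr₁, ?_⟩
  exact (h.mul_flux_nonneg (fun r hr => (hc r hr).le) hr₀).trans_lt
    (hstrict (left_mem_Icc.mpr hr₁.le) (right_mem_Icc.mpr hr₁.le) hr₁)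

lemma pos_of_mul_flux_pos (hc : ∀ r, 0 ≤ r → 0 ≤ c r) (hr₁ : 0 < r₁)
    (hW : 0 < (u * flux u) r₁) (hu₁ : 0 < u r₁) (hr : r₁ ≤ r) : 0 < u r ∧ 0 < deriv u r := by
  have hWpos : ∀ r ∈ Ici r₁, 0 < u r * flux u r := fun r hr =>
    hW.trans_le (h.monotoneOn_mul_flux hc hr₁.le (hr₁.le.trans hr) hr)
  have hupos : 0 < u r := isPreconnected_Ici.lt_of_ne
    (h.1.continuousOn.mono (Ici_subset_Ici.mpr hr₁.le))
    (fun x hx hx0 => by simpa [hx0] using hWpos x hx) ⟨r₁, self_mem_Ici, hu₁⟩ hr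
  exact ⟨hupos, pos_of_mul_pos_right (pos_of_mul_pos_right (hWpos r hr) hupos.le) (sq_nonneg r)⟩

lemma mul_sub_le_flux (hm : 0 < m) (hc : ∀ r, 0 ≤ r → m ≤ c r) (hr₁ : 0 < r₁)
    (hpos : ∀ r, r₁ ≤ r → 0 < u r ∧ 0 < deriv u r) (hr : r₁ ≤ r) :
    m * u r₁ * (r - r₁) ≤ flux u r := by
  have hr_pos : ∀ x ∈ Ici r₁, 0 < x := fun x hx => hr₁.trans_le hx
  have hu_mono : MonotoneOn u (Ici r₁) :=
    monotoneOn_of_hasDerivWithinAt_nonneg (convex_Ici r₁)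
      (fun x hx => (h.differentiableAt (hr_pos x hx)).continuousAt.continuousWithinAt)
      (fun x hx => (h.differentiableAt (hr_pos x (interior_subset hx))).hasDerivAt.hasDerivWithinAt)
      fun x hx => (hpos x (interior_subset hx)).2.le
  have hflux_deriv : ∀ x ∈ interior (Ici r₁), m * u r₁ ≤ deriv (flux u) x := by
    intro x hx
    replace hx := interior_subset hx
    rw [(h.hasDerivAt_flux (hr_pos x hx)).deriv]
    exact mul_le_mul (hc x (hr_pos x hx).le) (hu_mono self_mem_Ici hx hx) (hpos r₁ le_rfl).1.le
      (hm.le.trans (hc x (hr_pos x hx).le))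
  have := (convex_Ici r₁).mul_sub_le_image_sub_of_le_deriv
    (fun x hx => (h.hasDerivAt_flux (hr_pos x hx)).continuousAt.continuousWithinAt)
    (fun x hx => (h.hasDerivAt_flux (hr_pos x (interior_subset hx))).differentiableAt
      |>.differentiableWithinAt)
    hflux_deriv r₁ self_mem_Ici r hr hr
  have : 0 ≤ flux u r₁ := mul_nonneg (sq_nonneg r₁) (hpos r₁ le_rfl).2.le
  linarith

lemma tendsto_atTop_of_mul_flux_pos (hm : 0 < m) (hc : ∀ r, 0 ≤ r → m ≤ c r) (hr₁ : 0 < r₁)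
    (hW : 0 < (u * flux u) r₁) (hu₁ : 0 < u r₁) : Tendsto u atTop atTop := by
  have hpos : ∀ r, r₁ ≤ r → 0 < u r ∧ 0 < deriv u r := fun r hr =>
    h.pos_of_mul_flux_pos (fun r hr => hm.le.trans (hc r hr)) hr₁ hW hu₁ hr
  -- `r² u' = flux u r ≥ m u(r₁) (r - r₁) ≥ m u(r₁) r / 2` once `r ≥ 2 r₁`
  refine tendsto_atTop_of_div_le_deriv (C := m * u r₁ / 2) (by positivity : 0 < 2 * r₁)
    (by positivity) (fun x hx => h.differentiableAt (by linarith)) fun x hx => ?_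
  have hflux := h.mul_sub_le_flux hm hc hr₁ hpos (by linarith : r₁ ≤ x)
  rw [flux] at hflux
  rw [div_le_iff₀ (by linarith)]
  nlinarith [mul_pos hm hu₁]

lemma tendsto_abs_atTop (hm : 0 < m) (hc : ∀ r, 0 ≤ r → m ≤ c r) (hr₁ : 0 < r₁)
    (hW : 0 < (u * flux u) r₁) : Tendsto (fun r => |u r|) atTop atTop := by
  rcases (left_ne_zero_of_mul hW.ne').lt_or_gt with hneg | hpos
  · refine tendsto_atTop_mono (fun r => neg_le_abs (u r)) ?_
    exact h.neg.tendsto_atTop_of_mul_flux_pos hm hc hr₁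
      (by simpa [flux_neg] using hW) (by simpa using hneg)
  · exact tendsto_atTop_mono (fun r => le_abs_self (u r))
      (h.tendsto_atTop_of_mul_flux_pos hm hc hr₁ hW hpos)

end IsRadialSolution

theorem stmt0_general
    (a : ℝ → ℝ) (ha : Continuous a) (hsupp : HasCompactSupport a)
    (l : ℝ)
    (hpos : ∀ r : ℝ, 0 ≤ r → 0 < l + 4 * Real.pi * r ^ 2 * a r)
    (u : ℝ → ℝ) (hu : ContDiffOn ℝ 2 u (Set.Ici 0))
    (hbdd : ∃ M : ℝ, ∀ r : ℝ, 0 ≤ r → |u r| ≤ M)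
    (hode : ∀ r : ℝ, 0 ≤ r →
      deriv (fun s => s ^ 2 * deriv u s) r = (l + 4 * Real.pi * r ^ 2 * a r) * u r) :
    ∀ r : ℝ, 0 ≤ r → u r = 0 := by
  set c : ℝ → ℝ := fun r => l + 4 * π * r ^ 2 * a r
  have hsol : IsRadialSolution c u := ⟨hu, hode⟩
  have hc_eventually : c =ᶠ[atTop] fun _ => l := by
    have ha₀ : a =ᶠ[atTop] 0 := (hasCompactSupport_iff_eventuallyEq.mp hsupp).filter_mono
      (coclosedCompact_eq_cocompact (X := ℝ) ▸ atTop_le_cocompact)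
    filter_upwards [ha₀] with r hr
    simp [c, hr]
  obtain ⟨m, hm, hcm⟩ := exists_pos_le_of_eventuallyEq_const (by fun_prop) hpos hc_eventually
  obtain ⟨M, hM⟩ := hbdd
  intro r₀ hr₀
  by_contra hu₀
  obtain ⟨r₁, hr₁, hW⟩ := hsol.exists_mul_flux_pos (fun r hr => hm.trans_le (hcm r hr)) hr₀ hu₀
  obtain ⟨r, hMr, hr⟩ := (((hsol.tendsto_abs_atTop hm hcm hr₁ hW).eventually_gt_atTop M).and
    (eventually_ge_atTop 0)).exists
  exact (hM r hr).not_gt hMr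

/-- If `a` is continuous with compact support, `l > 0`, and
`l + 4π r² a(r) > 0` for all `r ≥ 0`, then any bounded `C²` solution on `[0,∞)` of
`(r² u')' = (l + 4π r² a(r)) u` vanishes identically on `[0,∞)`. -/
theorem stmt0
    (a : ℝ → ℝ) (ha : Continuous a) (hsupp : HasCompactSupport a)
    (l : ℝ) (hl : 0 < l)
    (hpos : ∀ r : ℝ, 0 ≤ r → 0 < l + 4 * Real.pi * r ^ 2 * a r)
    (u : ℝ → ℝ) (hu : ContDiffOn ℝ 2 u (Set.Ici 0))
    (hbdd : ∃ M : ℝ, ∀ r : ℝ, 0 ≤ r → |u r| ≤ M)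
    (hode : ∀ r : ℝ, 0 ≤ r →
      deriv (fun s => s ^ 2 * deriv u s) r = (l + 4 * Real.pi * r ^ 2 * a r) * u r) :
    ∀ r : ℝ, 0 ≤ r → u r = 0 :=
  stmt0_general a ha hsupp l hpos u hu hbdd hode
end

section
/- Let a : [0,∞) → ℝ be continuous and let g ∈ C²([0,∞)) satisfy (r² g')' = 4π r² a(r) g for r ≥ 0 with g(0) = 0 and g' bounded near 0. Then g = 0 on [0,∞). -/
/-!
Write `g'` for the one-sided derivative `derivWithin g (Ici 0)`, which is continuous on
`[0, ∞)` and agrees with `deriv g` for `r > 0`. Integrating the equation from `0`, where the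
flux `r² g'(r)` vanishes, gives `r² g'(r) = ∫₀ʳ 4π s² a g`, so `|g'(r)| ≤ 4π C ∫₀ʳ |g|` when
`|a| ≤ C` on `[0, R]`. Integrating once more, `|g t| ≤ 4π C R ∫₀ᵗ |g|` on `[0, R]`, and
Grönwall's inequality for `t ↦ ∫₀ᵗ |g|` forces `g = 0` there.
-/

open Set intervalIntegral Real

theorem eq_zero_of_norm_le_mul_integral_norm {E : Type*} [NormedAddCommGroup E] {f : ℝ → E}
    {K a b : ℝ} (hf : ContinuousOn f (Icc a b))
    (hle : ∀ t ∈ Icc a b, ‖f t‖ ≤ K * ∫ s in a..t, ‖f s‖) :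
    ∀ t ∈ Icc a b, f t = 0 := by
  intro t ht
  have hab : a ≤ b := ht.1.trans ht.2
  have hnorm : ContinuousOn (fun s => ‖f s‖) (Icc a b) := hf.norm
  have hprim : ∀ x ∈ Icc a b, (∫ s in a..x, ‖f s‖) = 0 := by
    refine eq_zero_of_abs_deriv_le_mul_abs_self_of_eq_zero_right (f' := fun s => ‖f s‖) (K := K)
      ?_ ?_ integral_same ?_
    · simpa only [uIcc_of_le hab] using
        continuousOn_primitive_interval' (hnorm.intervalIntegrable_of_Icc hab) left_mem_uIcc
    · intro x hx
      have : Fact (x ∈ Icc a b) := ⟨Ico_subset_Icc_self hx⟩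
      exact (integral_hasDerivWithinAt_right
        ((hnorm.mono (Icc_subset_Icc_right hx.2.le)).intervalIntegrable_of_Icc hx.1)
        (hnorm.stronglyMeasurableAtFilter_nhdsWithin measurableSet_Icc x)
        (hnorm x this.out)).mono_of_mem_nhdsWithin
          (Filter.mem_of_superset (Icc_mem_nhdsGE hx.2) (Icc_subset_Icc_left hx.1))
    · intro x hx
      rw [norm_norm, Real.norm_of_nonneg (integral_nonneg hx.1 fun _ _ => norm_nonneg _)]
      exact hle x (Ico_subset_Icc_self hx)
  simpa [hprim t ht] using hle t ht

theorem sq_mul_derivWithin_eq_integral {g F : ℝ → ℝ} (hg : ContDiffOn ℝ 2 g (Ici 0))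
    (hF : ContinuousOn F (Ici 0))
    (hode : ∀ r, 0 < r → deriv (fun s => s ^ 2 * deriv g s) r = F r) {r : ℝ} (hr : 0 ≤ r) :
    r ^ 2 * derivWithin g (Ici 0) r = ∫ s in 0..r, F s := by
  have hg' : ContDiffOn ℝ 1 (derivWithin g (Ici 0)) (Ici 0) :=
    hg.derivWithin (uniqueDiffOn_Ici 0) (by norm_num)
  have hflux : ContinuousOn (fun s => s ^ 2 * derivWithin g (Ici 0) s) (Icc 0 r) :=
    ((continuous_pow 2).continuousOn.mul hg'.continuousOn).mono Icc_subset_Ici_self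
  have hflux' : ∀ s ∈ Ioo 0 r,
      HasDerivAt (fun s => s ^ 2 * derivWithin g (Ici 0) s) (F s) s := by
    intro s hs
    have hnhds : Ici (0 : ℝ) ∈ nhds s := Ici_mem_nhds hs.1
    have heq : (fun s => s ^ 2 * derivWithin g (Ici 0) s) =ᶠ[nhds s]
        fun s => s ^ 2 * deriv g s := by
      filter_upwards [Ioi_mem_nhds hs.1] with t (ht : 0 < t)
      rw [derivWithin_of_mem_nhds (Ici_mem_nhds ht)]
    have hdiff : DifferentiableAt ℝ (fun s => s ^ 2 * derivWithin g (Ici 0) s) s :=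
      (differentiableAt_pow 2).mul
        ((hg'.differentiableOn one_ne_zero s hs.1.le).differentiableAt hnhds)
    simpa only [heq.deriv_eq, hode s hs.1] using hdiff.hasDerivAt
  rw [integral_eq_sub_of_hasDerivAt_of_le hr hflux hflux'
    ((hF.mono Icc_subset_Ici_self).intervalIntegrable_of_Icc hr)]
  simp

theorem abs_derivWithin_le_integral_abs {a g : ℝ → ℝ} {C s : ℝ} (ha : ContinuousOn a (Ici 0))
    (hg : ContDiffOn ℝ 2 g (Ici 0))
    (hode : ∀ r, 0 < r → deriv (fun s => s ^ 2 * deriv g s) r = 4 * π * r ^ 2 * a r * g r)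
    (hs : 0 < s) (hC : ∀ t ∈ Icc 0 s, |a t| ≤ C) :
    |derivWithin g (Ici 0) s| ≤ 4 * π * C * ∫ t in 0..s, |g t| := by
  have hgc : ContinuousOn g (Ici 0) := hg.continuousOn
  have hF : ContinuousOn (fun t => 4 * π * t ^ 2 * a t * g t) (Ici 0) := by fun_prop
  have key : s ^ 2 * |derivWithin g (Ici 0) s| ≤ s ^ 2 * (4 * π * C * ∫ t in 0..s, |g t|) :=
    calc s ^ 2 * |derivWithin g (Ici 0) s|
        = |∫ t in 0..s, 4 * π * t ^ 2 * a t * g t| := by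
          rw [← sq_mul_derivWithin_eq_integral hg hF hode hs.le, abs_mul, abs_sq]
      _ ≤ ∫ t in 0..s, |4 * π * t ^ 2 * a t * g t| := abs_integral_le_integral_abs hs.le
      _ ≤ ∫ t in 0..s, 4 * π * s ^ 2 * C * |g t| := by
          refine integral_mono_on hs.le ?_ ?_ fun t ht => ?_
          · exact (hF.abs.mono Icc_subset_Ici_self).intervalIntegrable_of_Icc hs.le
          · exact ((continuousOn_const.mul hgc.abs).mono Icc_subset_Ici_self
              |>.intervalIntegrable_of_Icc hs.le)
          rw [abs_mul, abs_mul, abs_mul, abs_of_pos (by positivity : 0 < 4 * π), abs_sq]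
          have : 0 ≤ |a t| := abs_nonneg _
          gcongr
          exacts [ht.1, ht.2, hC t ht]
      _ = s ^ 2 * (4 * π * C * ∫ t in 0..s, |g t|) := by rw [integral_const_mul]; ring
  exact le_of_mul_le_mul_left key (by positivity)

theorem abs_le_mul_integral_abs_of_abs_derivWithin_le {f : ℝ → ℝ} {K a t : ℝ}
    (hf : ContDiffOn ℝ 1 f (Ici a)) (ha : f a = 0) (hK : 0 ≤ K) (ht : a ≤ t)
    (hbound : ∀ s ∈ Ioo a t, |derivWithin f (Ici a) s| ≤ K * ∫ u in a..s, |f u|) :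
    |f t| ≤ K * (t - a) * ∫ u in a..t, |f u| := by
  have hf' : ContinuousOn (derivWithin f (Ici a)) (Icc a t) :=
    (hf.continuousOn_derivWithin (uniqueDiffOn_Ici a) le_rfl).mono Icc_subset_Ici_self
  have hftc : f t = ∫ s in a..t, derivWithin f (Ici a) s := by
    rw [integral_eq_sub_of_hasDerivAt_of_le ht (hf.continuousOn.mono Icc_subset_Ici_self)
      (fun s hs => (hf.differentiableOn one_ne_zero s hs.1.le).hasDerivWithinAt.hasDerivAt
        (Ici_mem_nhds hs.1)) (hf'.intervalIntegrable_of_Icc ht), ha, sub_zero]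
  calc |f t| ≤ ∫ s in a..t, |derivWithin f (Ici a) s| := hftc ▸ abs_integral_le_integral_abs ht
    _ ≤ ∫ _ in a..t, K * ∫ u in a..t, |f u| := by
        refine integral_mono_on_of_le_Ioo ht (hf'.abs.intervalIntegrable_of_Icc ht)
          intervalIntegrable_const fun s hs => (hbound s hs).trans ?_
        gcongr
        refine integral_mono_interval le_rfl hs.1.le hs.2.le
          (Filter.Eventually.of_forall fun _ => abs_nonneg _) ?_
        exact (hf.continuousOn.abs.mono Icc_subset_Ici_self).intervalIntegrable_of_Icc ht
    _ = K * (t - a) * ∫ u in a..t, |f u| := by rw [integral_const, smul_eq_mul]; ring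

theorem stmt1_general
    (a : ℝ → ℝ) (ha : Continuous a)
    (g : ℝ → ℝ) (hg : ContDiffOn ℝ 2 g (Set.Ici 0))
    (hode : ∀ r : ℝ, 0 ≤ r →
      deriv (fun s => s ^ 2 * deriv g s) r = 4 * Real.pi * r ^ 2 * a r * g r)
    (h0 : g 0 = 0) :
    ∀ r : ℝ, 0 ≤ r → g r = 0 := by
  intro r hr
  obtain ⟨C, hC⟩ := isCompact_Icc.exists_bound_of_continuousOn (ha.continuousOn (s := Icc 0 r))
  have hC0 : 0 ≤ C := (norm_nonneg _).trans (hC 0 ⟨le_rfl, hr⟩)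
  have hg' : ∀ s ∈ Ioo 0 r, |derivWithin g (Ici 0) s| ≤ 4 * π * C * ∫ t in 0..s, |g t| :=
    fun s hs => abs_derivWithin_le_integral_abs ha.continuousOn hg (fun r hr => hode r hr.le)
      hs.1 fun t ht => hC t ⟨ht.1, ht.2.trans hs.2.le⟩
  refine eq_zero_of_norm_le_mul_integral_norm (K := 4 * π * C * r)
    (hg.continuousOn.mono Icc_subset_Ici_self) (fun t ht => ?_) r ⟨hr, le_rfl⟩
  calc |g t| ≤ 4 * π * C * (t - 0) * ∫ s in 0..t, |g s| :=
        abs_le_mul_integral_abs_of_abs_derivWithin_le (hg.of_le one_le_two) h0 (by positivity)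
          ht.1 fun s hs => hg' s ⟨hs.1, hs.2.trans_le ht.2⟩
    _ ≤ 4 * π * C * r * ∫ s in 0..t, |g s| := by
        gcongr
        · exact integral_nonneg ht.1 fun _ _ => abs_nonneg _
        · linarith [ht.2]

/-- If `a` is continuous and `g ∈ C²([0,∞))` satisfies `(r² g')' = 4π r² a(r) g` on `[0,∞)`
with `g(0) = 0` and `g'` bounded near `0`, then `g = 0` on `[0,∞)`. -/
theorem stmt1
    (a : ℝ → ℝ) (ha : Continuous a)
    (g : ℝ → ℝ) (hg : ContDiffOn ℝ 2 g (Set.Ici 0))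
    (hode : ∀ r : ℝ, 0 ≤ r →
      deriv (fun s => s ^ 2 * deriv g s) r = 4 * Real.pi * r ^ 2 * a r * g r)
    (h0 : g 0 = 0)
    (hbdd : ∃ M ε : ℝ, 0 < ε ∧ ∀ r : ℝ, 0 ≤ r → r ≤ ε → |deriv g r| ≤ M) :
    ∀ r : ℝ, 0 ≤ r → g r = 0 :=
  stmt1_general a ha g hg hode h0
end

section
/- Let M : ℝ² → ℝ be continuous with compact support contained in the ball B_R(0) ⊂ ℝ², odd in the first variable (M(-ρ,z) = -M(ρ,z)), and set G(ρ,z) := ∫_{ℝ²} ln|(ρ-ρ̃, z-z̃)| M(ρ̃,z̃) dρ̃ dz̃. Then there is C > 0 with |G(ρ,z)| ≤ C/|(ρ,z)| for all |(ρ,z)| ≥ 2R. -/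
/-! Oddness in `ρ` makes the total mass of `M` vanish, so `log |p|` may be subtracted from the
kernel: `G p = ∫ (log |p - q| - log |p|) M q`. On the support of `M`, `|q| < R ≤ |p| / 2`, and there
`log` is `2 / |p|`-Lipschitz between `|p - q|` and `|p|`, so the integrand is at most
`2R / |p| · |M q|`. -/

open MeasureTheory WithLp

theorem integral_eq_zero_of_odd_fst {β E : Type*} [MeasurableSpace β] {ν : Measure β} [SFinite ν]
    [NormedAddCommGroup E] [NormedSpace ℝ E]
    (f : ℝ × β → E) (hf : ∀ x y, f (-x, y) = -f (x, y)) :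
    ∫ q, f q ∂(volume.prod ν) = 0 := by
  have : IsAddTorsionFree E := .of_isTorsionFree ℝ E
  have hneg : MeasurePreserving ((MeasurableEquiv.neg ℝ).prodCongr (MeasurableEquiv.refl β))
      (volume.prod ν) (volume.prod ν) :=
    (Measure.measurePreserving_neg volume).prod (MeasurePreserving.id ν)
  rw [← self_eq_neg, ← integral_neg, ← hneg.integral_comp' f]
  exact integral_congr_ae (.of_forall fun q => hf q.1 q.2)

theorem abs_log_sub_log_le_div {a b c : ℝ} (hc : 0 < c) (ha : c ≤ a) (hb : c ≤ b) :
    |Real.log a - Real.log b| ≤ |a - b| / c := by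
  have ha0 : 0 < a := hc.trans_le ha
  have hb0 : 0 < b := hc.trans_le hb
  have hupper : Real.log a - Real.log b ≤ (a - b) / b := by
    rw [← Real.log_div ha0.ne' hb0.ne', sub_div, div_self hb0.ne']
    exact Real.log_le_sub_one_of_pos (by positivity)
  have hlower : (a - b) / a ≤ Real.log a - Real.log b := by
    rw [← Real.log_div ha0.ne' hb0.ne', sub_div, div_self ha0.ne', ← inv_div]
    exact Real.one_sub_inv_le_log_of_pos (by positivity)
  have hb' : (a - b) / b ≤ |a - b| / c :=
    (div_le_div_of_nonneg_right (le_abs_self _) hb0.le).trans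
      (div_le_div_of_nonneg_left (abs_nonneg _) hc hb)
  have ha' : -(|a - b| / c) ≤ (a - b) / a := by
    rw [← neg_div, div_le_div_iff₀ hc ha0]
    nlinarith [neg_abs_le (a - b), abs_nonneg (a - b)]
  exact abs_le.mpr ⟨ha'.trans hlower, hupper.trans hb'⟩

theorem abs_log_norm_sub_sub_log_norm_le {E : Type*} [SeminormedAddCommGroup E] {p q : E}
    (hp : 0 < ‖p‖) (hq : 2 * ‖q‖ ≤ ‖p‖) :
    |Real.log ‖p - q‖ - Real.log ‖p‖| ≤ 2 * ‖q‖ / ‖p‖ := by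
  have hpq : ‖p‖ / 2 ≤ ‖p - q‖ := by linarith [norm_sub_norm_le p q]
  calc |Real.log ‖p - q‖ - Real.log ‖p‖|
      ≤ |‖p - q‖ - ‖p‖| / (‖p‖ / 2) := abs_log_sub_log_le_div (by positivity) hpq (by linarith)
    _ ≤ ‖q‖ / (‖p‖ / 2) := by
        gcongr
        simpa using abs_norm_sub_norm_le (p - q) p
    _ = 2 * ‖q‖ / ‖p‖ := by field_simp

theorem abs_integral_mul_le_of_integral_eq_zero {α : Type*} [MeasurableSpace α] {μ : Measure α}
    {L M : α → ℝ} {c K : ℝ} (hL : AEStronglyMeasurable L μ) (hM : Integrable M μ)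
    (hM0 : ∫ q, M q ∂μ = 0) (hLc : ∀ q, M q ≠ 0 → |L q - c| ≤ K) :
    |∫ q, L q * M q ∂μ| ≤ K * ∫ q, |M q| ∂μ := by
  have hbound : ∀ q, ‖(L q - c) * M q‖ ≤ K * |M q| := by
    intro q
    by_cases hq : M q = 0
    · simp [hq]
    · rw [Real.norm_eq_abs, abs_mul]
      exact mul_le_mul_of_nonneg_right (hLc q hq) (abs_nonneg _)
  have hint : Integrable (fun q => (L q - c) * M q) μ :=
    .mono' (hM.abs.const_mul K) ((hL.sub aestronglyMeasurable_const).mul hM.1)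
      (.of_forall hbound)
  have hsplit : ∫ q, L q * M q ∂μ = ∫ q, (L q - c) * M q ∂μ := by
    calc ∫ q, L q * M q ∂μ = ∫ q, ((L q - c) * M q + c * M q) ∂μ := by congr 1 with q; ring
      _ = ∫ q, (L q - c) * M q ∂μ := by
        rw [integral_add hint (hM.const_mul c), integral_const_mul, hM0, mul_zero, add_zero]
  rw [hsplit, ← Real.norm_eq_abs, ← integral_const_mul]
  exact norm_integral_le_of_norm_le (hM.abs.const_mul K) (.of_forall hbound)

theorem sqrt_sq_add_sq_eq_norm_toLp (q : ℝ × ℝ) : √(q.1 ^ 2 + q.2 ^ 2) = ‖toLp 2 q‖ := by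
  simp [WithLp.prod_norm_eq_of_L2]

/-- Decay of the 2D logarithmic potential of a compactly supported density which is odd in
the first variable. -/
theorem stmt8
    (R : ℝ) (hR : 0 < R)
    (M : ℝ × ℝ → ℝ) (hM : Continuous M) (hsupp : HasCompactSupport M)
    (hball : ∀ q : ℝ × ℝ, M q ≠ 0 → Real.sqrt (q.1 ^ 2 + q.2 ^ 2) < R)
    (hodd : ∀ ρ z : ℝ, M (-ρ, z) = -M (ρ, z))
    (G : ℝ × ℝ → ℝ)
    (hG : ∀ p : ℝ × ℝ, G p =
      ∫ q : ℝ × ℝ, Real.log (Real.sqrt ((p.1 - q.1) ^ 2 + (p.2 - q.2) ^ 2)) * M q) :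
    ∃ C : ℝ, 0 < C ∧ ∀ p : ℝ × ℝ,
      2 * R ≤ Real.sqrt (p.1 ^ 2 + p.2 ^ 2) →
        |G p| ≤ C / Real.sqrt (p.1 ^ 2 + p.2 ^ 2) := by
  have hMint : Integrable M := hM.integrable_of_hasCompactSupport hsupp
  have hM0 : ∫ q, M q = 0 := integral_eq_zero_of_odd_fst M hodd
  set I := ∫ q, |M q|
  have hI : 0 ≤ I := integral_nonneg fun q => abs_nonneg _
  refine ⟨2 * R * I + 1, by positivity, fun p hp => ?_⟩
  simp only [sqrt_sq_add_sq_eq_norm_toLp] at hball hp ⊢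
  have hG' : G p = ∫ q, Real.log ‖toLp 2 p - toLp 2 q‖ * M q := by
    simp [hG p, ← WithLp.toLp_sub, ← sqrt_sq_add_sq_eq_norm_toLp]
  have hp0 : 0 < ‖toLp 2 p‖ := by linarith
  have hbound : |∫ q, Real.log ‖toLp 2 p - toLp 2 q‖ * M q| ≤ 2 * R / ‖toLp 2 p‖ * I := by
    refine abs_integral_mul_le_of_integral_eq_zero (c := Real.log ‖toLp 2 p‖)
      (Measurable.aestronglyMeasurable (by fun_prop)) hMint hM0 fun q hq => ?_
    have hqR := hball q hq
    calc |Real.log ‖toLp 2 p - toLp 2 q‖ - Real.log ‖toLp 2 p‖|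
        ≤ 2 * ‖toLp 2 q‖ / ‖toLp 2 p‖ := abs_log_norm_sub_sub_log_norm_le hp0 (by linarith)
      _ ≤ 2 * R / ‖toLp 2 p‖ := by gcongr
  calc |G p| ≤ 2 * R / ‖toLp 2 p‖ * I := hG' ▸ hbound
    _ ≤ (2 * R * I + 1) / ‖toLp 2 p‖ := by
      rw [div_mul_eq_mul_div]
      gcongr
      linarith
end
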